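/- Let G be a finite group and H a Gelfand subgroup. For an irreducible complex representation π of G, considering the irreducible representation π⊗π^∨ of G×G with the diagonal subgroup ΔG and the subgroup H×H, the correlation constant c(π⊗π^∨; ΔG, H×H) = |⟨v_{H×H}, v_{ΔG}⟩|² equals 1/(dim π). -/

import Mathlib

/-!
Through `e`, the action `τ (g, h)` becomes `X ↦ ρ g * X * ρ h⁻¹` on `End V`. By Schur's lemma
`e v_ΔG = c • 1`, and since `V^H` is a line, `e v_{H×H} = t • P`, where `P` is the averaging
projection of `H` and `t` the trace of `e v_{H×H}`. Summing `v_{H×H}` over `ΔG` gives a multiple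
of `v_ΔG` (an intertwiner is scalar, and traces fix the scalar), and summing `v_ΔG` over `H × H`
gives a multiple of `v_{H×H}` (because `P² = P`). As `τ` is unitary, pairing these sums with the
fixed unit vectors yields `⟪v_ΔG, v_{H×H}⟫ = t / (n c)` and `⟪v_{H×H}, v_ΔG⟫ = c / t`, with
`n = dim V`; their product is `1 / n`.
-/

open scoped InnerProductSpace

/-- The subspace of vectors fixed by every element of a subgroup `H` under a
representation `ρ`. -/
def fixedSpace {k G V : Type*} [CommSemiring k] [Group G] [AddCommMonoid V] [Module k V]
    (ρ : Representation k G V) (H : Subgroup G) : Submodule k V where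
  carrier := {v | ∀ h ∈ H, ρ h v = v}
  add_mem' := by
    intro a b ha hb h hh
    simp [map_add, ha h hh, hb h hh]
  zero_mem' := by
    intro h hh
    simp
  smul_mem' := by
    intro c a ha h hh
    simp [map_smul, ha h hh]

open Module

theorem LinearMap.IsProj.eq_trace_smul {k V : Type*} [Field k] [AddCommGroup V] [Module k V]
    [FiniteDimensional k V] {U : Submodule k V} {P : End k V} (hP : IsProj U P)
    (hU : finrank k U = 1) {X : End k V} (hX : ∀ v, X v ∈ U) (hXP : X * P = X) :
    X = LinearMap.trace k V X • P := by
  obtain ⟨u, -, hspan⟩ := finrank_eq_one_iff'.mp hU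
  obtain ⟨a, ha⟩ := hspan ⟨X u, hX u⟩
  have hXa : X = a • P := by
    ext v
    obtain ⟨t, ht⟩ := hspan ⟨P v, hP.map_mem v⟩
    have hPv : t • (u : V) = P v := congrArg Subtype.val ht
    have hXu : a • (u : V) = X u := congrArg Subtype.val ha
    calc X v = X (P v) := by rw [← End.mul_apply, hXP]
      _ = a • P v := by rw [← hPv, map_smul, ← hXu, smul_comm]
  rw [hXa, map_smul, hP.trace, hU, Nat.cast_one, smul_eq_mul, mul_one]

theorem card_mul_inner_eq_of_sum_eq_smul {𝕜 W ι : Type*} [RCLike 𝕜] [NormedAddCommGroup W]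
    [InnerProductSpace 𝕜 W] [Fintype ι] (T : ι → W → W)
    (hT : ∀ i w w', ⟪T i w, T i w'⟫_𝕜 = ⟪w, w'⟫_𝕜) {v w : W} (hv : ∀ i, T i v = v)
    (hv1 : ‖v‖ = 1) {a : 𝕜} (hsum : ∑ i, T i w = a • v) :
    (Fintype.card ι : 𝕜) * ⟪v, w⟫_𝕜 = a :=
  calc (Fintype.card ι : 𝕜) * ⟪v, w⟫_𝕜 = ∑ i, ⟪T i v, T i w⟫_𝕜 := by simp [hT]
    _ = a := by
      simp only [hv, ← inner_sum, hsum, inner_smul_right, inner_self_eq_norm_sq_to_K, hv1]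
      simp

namespace Representation

variable {k G V : Type*} [AddCommGroup V]

theorem exists_eq_smul_one_of_commute [Field k] [Module k V] [Monoid G] [IsAlgClosed k]
    [FiniteDimensional k V] [Nontrivial V] (ρ : Representation k G V)
    (hirr : ∀ U : Submodule k V, (∀ g v, v ∈ U → ρ g v ∈ U) → U = ⊥ ∨ U = ⊤)
    {T : End k V} (hT : ∀ g, Commute (ρ g) T) : ∃ c : k, T = c • 1 := by
  obtain ⟨c, hc⟩ := End.exists_eigenvalue T
  have hstable : ∀ g v, v ∈ T.eigenspace c → ρ g v ∈ T.eigenspace c := by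
    intro g v hv
    rw [End.mem_eigenspace_iff] at hv ⊢
    rw [← End.mul_apply, ← (hT g).eq, End.mul_apply, hv, map_smul]
  refine ⟨c, LinearMap.ext fun v => ?_⟩
  rcases hirr _ hstable with hbot | htop
  · exact absurd hbot hc
  · exact End.mem_eigenspace_iff.mp (htop ▸ Submodule.mem_top)

theorem exists_eq_smul_one_of_conj_eq [Field k] [Module k V] [Group G] [IsAlgClosed k]
    [FiniteDimensional k V] [Nontrivial V] (ρ : Representation k G V)
    (hirr : ∀ U : Submodule k V, (∀ g v, v ∈ U → ρ g v ∈ U) → U = ⊥ ∨ U = ⊤)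
    {X : End k V} (hX : ∀ g, ρ g * X * ρ g⁻¹ = X) : ∃ c : k, X = c • 1 :=
  ρ.exists_eq_smul_one_of_commute hirr fun g =>
    calc ρ g * X = ρ g * X * ρ g⁻¹ * ρ g := by
          rw [mul_assoc _ (ρ g⁻¹), ← map_mul, inv_mul_cancel, map_one, mul_one]
      _ = X * ρ g := by rw [hX]

theorem sum_conj_eq_smul_one [Field k] [Module k V] [Group G] [Fintype G] [IsAlgClosed k]
    [CharZero k] [FiniteDimensional k V] [Nontrivial V] (ρ : Representation k G V)
    (hirr : ∀ U : Submodule k V, (∀ g v, v ∈ U → ρ g v ∈ U) → U = ⊥ ∨ U = ⊤) (X : End k V) :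
    ∑ g, ρ g * X * ρ g⁻¹ = ((Fintype.card G : k) * LinearMap.trace k V X / finrank k V) • 1 := by
  have hinv (g : G) : ρ g⁻¹ * ρ g = 1 := by rw [← map_mul, inv_mul_cancel, map_one]
  obtain ⟨c, hc⟩ := ρ.exists_eq_smul_one_of_conj_eq hirr (X := ∑ g, ρ g * X * ρ g⁻¹) fun g₀ => by
    rw [Finset.mul_sum, Finset.sum_mul]
    refine (Finset.sum_congr rfl fun g _ => ?_).trans
      (Equiv.sum_comp (Equiv.mulLeft g₀) fun g => ρ g * X * ρ g⁻¹)
    simp only [Equiv.coe_mulLeft, mul_inv_rev, map_mul, mul_assoc]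
  have htrace : LinearMap.trace k V (∑ g, ρ g * X * ρ g⁻¹) =
      Fintype.card G * LinearMap.trace k V X := by
    simp only [map_sum, LinearMap.trace_mul_comm k _ (ρ _⁻¹), ← mul_assoc, hinv, one_mul,
      Finset.sum_const, Finset.card_univ, nsmul_eq_mul]
  rw [hc, map_smul, LinearMap.trace_one, smul_eq_mul] at htrace
  rw [hc, ← htrace, mul_div_cancel_right₀ _ (Nat.cast_ne_zero.mpr finrank_pos.ne')]

section Average

variable [CommRing k] [Module k V] [Group G] [Fintype G] [Invertible (Fintype.card G : k)]
  (ρ : Representation k G V)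

theorem sum_eq_card_smul_averageMap : ∑ g, ρ g = (Fintype.card G : k) • ρ.averageMap := by
  simp [averageMap, GroupAlgebra.average, smul_smul]

theorem mul_averageMap_of_forall_mul_eq {X : End k V} (hX : ∀ g, X * ρ g = X) :
    X * ρ.averageMap = X := by
  simp only [averageMap, GroupAlgebra.average, map_smul, map_sum, asAlgebraHom_of,
    Algebra.mul_smul_comm, Finset.mul_sum, hX, Finset.sum_const, Finset.card_univ,
    ← Nat.cast_smul_eq_nsmul k, smul_smul, invOf_mul_self, one_smul]

theorem sum_mul_inv_eq_card_sq_smul_averageMap :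
    ∑ p : G × G, ρ p.1 * ρ p.2⁻¹ = (Fintype.card G : k) ^ 2 • ρ.averageMap := by
  rw [Fintype.sum_prod_type' (fun a b => ρ a * ρ b⁻¹), ← Finset.sum_mul_sum,
    Fintype.sum_equiv (Equiv.inv G) (fun g => ρ g⁻¹) ρ fun _ => rfl,
    sum_eq_card_smul_averageMap, smul_mul_smul, ρ.isProj_averageMap.isIdempotentElem.eq, sq]

end Average

theorem invariants_comp_subtype [CommRing k] [Module k V] [Group G] (ρ : Representation k G V)
    (H : Subgroup G) : invariants (ρ.comp H.subtype) = fixedSpace ρ H := by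
  ext v
  simp [fixedSpace]

theorem eq_trace_smul_averageMap [Field k] [Module k V] [Group G] [Fintype G]
    [Invertible (Fintype.card G : k)] [FiniteDimensional k V] (ρ : Representation k G V)
    (hρ : finrank k ρ.invariants = 1) {X : End k V} (hleft : ∀ g, ρ g * X = X)
    (hright : ∀ g, X * ρ g = X) :
    X = LinearMap.trace k V X • ρ.averageMap :=
  ρ.isProj_averageMap.eq_trace_smul hρ (fun v g => LinearMap.congr_fun (hleft g) v)
    (ρ.mul_averageMap_of_forall_mul_eq hright)

end Representation

theorem stmt_2 {G : Type} [Group G] [Fintype G] (H : Subgroup G)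
    {V : Type} [AddCommGroup V] [Module ℂ V] [FiniteDimensional ℂ V] [Nontrivial V]
    (ρ : Representation ℂ G V)
    (hirr : ∀ U : Submodule ℂ V, (∀ g v, v ∈ U → ρ g v ∈ U) → U = ⊥ ∨ U = ⊤)
    (hGelfandH : ∀ (W : Type) (_ : AddCommGroup W) (_ : Module ℂ W),
      FiniteDimensional ℂ W → ∀ σ : Representation ℂ G W,
        (∀ U : Submodule ℂ W, (∀ g v, v ∈ U → σ g v ∈ U) → U = ⊥ ∨ U = ⊤) →
        Module.finrank ℂ (fixedSpace σ H) ≤ 1)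
    (hne : fixedSpace ρ H ≠ ⊥)
    {W : Type} [NormedAddCommGroup W] [InnerProductSpace ℂ W]
    (τ : Representation ℂ (G × G) W)
    (e : W ≃ₗ[ℂ] (V →ₗ[ℂ] V))
    (he : ∀ (g h : G) (w : W), e (τ (g, h) w) = ρ g ∘ₗ e w ∘ₗ ρ h⁻¹)
    (hτinv : ∀ (p : G × G) (w w' : W), ⟪τ p w, τ p w'⟫_ℂ = ⟪w, w'⟫_ℂ)
    (vHH vD : W) (hvHH1 : ‖vHH‖ = 1) (hvD1 : ‖vD‖ = 1)
    (hvHH : ∀ h₁ ∈ H, ∀ h₂ ∈ H, τ (h₁, h₂) vHH = vHH)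
    (hvD : ∀ g : G, τ (g, g) vD = vD) :
    ‖⟪vHH, vD⟫_ℂ‖ ^ 2 = 1 / (Module.finrank ℂ V : ℝ) := by
  classical
  set σ : Representation ℂ H V := ρ.comp H.subtype
  have hconj (g h : G) (w : W) : e (τ (g, h) w) = ρ g * e w * ρ h⁻¹ := he g h w
  have he0 (w : W) (hw : ‖w‖ = 1) : e w ≠ 0 := fun h0 => by simp [e.map_eq_zero_iff.mp h0] at hw
  obtain ⟨c, hc⟩ := ρ.exists_eq_smul_one_of_conj_eq hirr fun g => by rw [← hconj, hvD]
  have hc0 : c ≠ 0 := by rintro rfl; exact he0 vD hvD1 (by simp [hc])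
  have hfix : finrank ℂ σ.invariants = 1 := by
    rw [Representation.invariants_comp_subtype]
    exact le_antisymm (hGelfandH V _ _ ‹_› ρ hirr) (Submodule.one_le_finrank_iff.mpr hne)
  set t := LinearMap.trace ℂ V (e vHH) with ht
  have hA : e vHH = t • σ.averageMap := σ.eq_trace_smul_averageMap hfix
    (fun h => (by simpa [hvHH] using (hconj h 1 vHH).symm : ρ h * e vHH = e vHH))
    (fun h => (by simpa [hvHH] using (hconj 1 h⁻¹ vHH).symm : e vHH * ρ h = e vHH))
  have ht0 : t ≠ 0 := by rintro h0; exact he0 vHH hvHH1 (by simp [hA, h0])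
  have hdiag : ∑ g : G, τ (g, g) vHH = ((Fintype.card G : ℂ) * (t / (finrank ℂ V * c))) • vD := by
    apply e.injective
    simp only [map_sum, map_smul, hconj, ρ.sum_conj_eq_smul_one hirr, ← ht, hc, smul_smul]
    field_simp
  have hHH : ∑ p : H × H, τ (p.1, p.2) vD = ((Fintype.card (H × H) : ℂ) * (c / t)) • vHH := by
    apply e.injective
    simp only [map_sum, map_smul, hconj, hc, mul_smul_comm, smul_mul_assoc, mul_one]
    have hσ : ∑ p : H × H, ρ p.1 * ρ (p.2 : G)⁻¹ = (Fintype.card H : ℂ) ^ 2 • σ.averageMap :=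
      σ.sum_mul_inv_eq_card_sq_smul_averageMap
    rw [← Finset.smul_sum, hσ, hA, smul_smul, smul_smul, Fintype.card_prod, Nat.cast_mul, ← sq]
    field_simp
  have h1 := card_mul_inner_eq_of_sum_eq_smul (fun g => τ (g, g)) (fun _ => hτinv _) hvD hvD1 hdiag
  have h2 := card_mul_inner_eq_of_sum_eq_smul (fun p : H × H => τ (p.1, p.2)) (fun _ => hτinv _)
    (fun p => hvHH _ p.1.2 _ p.2.2) hvHH1 hHH
  rw [sq]
  nth_rewrite 1 [norm_inner_symm]
  rw [← norm_mul, mul_left_cancel₀ (by simp) h1, mul_left_cancel₀ (by simp) h2,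
    show t / (finrank ℂ V * c) * (c / t) = 1 / (finrank ℂ V : ℂ) by field_simp]
  simp
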